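/- arXiv:1710.09554 — 3 statements merged into one kernel-verified Lean document; each statement's English description precedes it below -/
import Mathlib

section
/- Variance bound on the SCDF-SVRG update direction (Corollary 1, with explicit provable constants): Suppose Assumption 2 holds, let x* ∈ ℝ^N and β_i^* := −(∂G(x*))^T∇F_i(G(x*)). Then for all x, x̃ ∈ ℝ^N, every integer A ≥ 1, and every family of vectors β_1,…,β_n ∈ ℝ^N, E_{σ,i}[ ‖(∂Ĝ(σ,x,x̃))^T ∇F_i(Ĝ(σ,x,x̃)) + β_i‖² ] ≤ 8(B_F² L_G² + B_G⁴ L_F²)·((1/A)‖x − x̃‖² + ‖x − x*‖²) + 2·(1/n)∑_{i=1}^n ‖β_i − β_i^*‖². -/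
/-!
Write the direction as `(∂Ĝᵀ ∇Fᵢ(Ĝ) - ∂G*ᵀ ∇Fᵢ(G*)) + (βᵢ - βᵢ*)` and the first bracket as
`(∂Ĝ - ∂G*)ᵀ ∇Fᵢ(Ĝ) + ∂G*ᵀ (∇Fᵢ(Ĝ) - ∇Fᵢ(G*))`. Since `‖Tᵀ v‖ ≤ ‖T‖_F ‖v‖`, the squared direction
is at most `4 B_F² ‖∂Ĝ - ∂G*‖_F² + 4 B_G² L_F² ‖Ĝ - G*‖² + 2 ‖βᵢ - βᵢ*‖²`.
Centring the samples, `Ĝ - G(x*)` is a sum of `A` independent uniform draws of a mean-zero family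
`(1/A)(Yⱼ - Ȳ)`, `Yⱼ = Gⱼ(x) - Gⱼ(x̃)`, plus `G(x) - G(x*)`; hence
`E‖Ĝ - G(x*)‖² = (1/A) Var(Y) + ‖G(x) - G(x*)‖² ≤ B_G² ((1/A) ‖x - x̃‖² + ‖x - x*‖²)`.
The Jacobian estimator is handled identically, its Frobenius norm being the norm of its columns in
an `ℓ²`-product.
-/

noncomputable section

open Finset
open scoped RealInnerProductSpace

abbrev Euc (N : ℕ) := EuclideanSpace ℝ (Fin N)

/-- Frobenius norm of a linear map between Euclidean spaces: the square root of the
sum of the squared norms of the columns. -/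
def frobNorm {N M : ℕ} (T : Euc N →L[ℝ] Euc M) : ℝ :=
  Real.sqrt (∑ j : Fin N, ‖T (EuclideanSpace.single j 1)‖ ^ 2)

/-- The averaged inner function `G = (1/m) ∑ⱼ Gⱼ`. -/
def Gbar {m N M : ℕ} (G : Fin m → Euc N → Euc M) (x : Euc N) : Euc M :=
  (m : ℝ)⁻¹ • ∑ j, G j x

/-- The averaged Jacobian `∂G = (1/m) ∑ⱼ ∂Gⱼ`. -/
def Jbar {m N M : ℕ} (J : Fin m → Euc N → (Euc N →L[ℝ] Euc M)) (x : Euc N) :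
    Euc N →L[ℝ] Euc M :=
  (m : ℝ)⁻¹ • ∑ j, J j x

/-- `Tᵀ v`: the transpose (adjoint) of `T` applied to `v`. -/
def transApp {N M : ℕ} (T : Euc N →L[ℝ] Euc M) (v : Euc M) : Euc N :=
  ContinuousLinearMap.adjoint T v

/-- Assumption 2 of the paper: bounded gradients, Lipschitz gradients, bounded
Jacobians (Frobenius norm), Lipschitz inner functions and Lipschitz Jacobians. -/
def Assumption2 {n m N M : ℕ} (G : Fin m → Euc N → Euc M)
    (J : Fin m → Euc N → (Euc N →L[ℝ] Euc M))
    (gradF : Fin n → Euc M → Euc M) (BF LF BG LG : ℝ) : Prop :=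
  (∀ i y, ‖gradF i y‖ ≤ BF) ∧
  (∀ i y y', ‖gradF i y - gradF i y'‖ ≤ LF * ‖y - y'‖) ∧
  (∀ j x, frobNorm (J j x) ≤ BG) ∧
  (∀ j x x', ‖G j x - G j x'‖ ≤ BG * ‖x - x'‖) ∧
  (∀ j x x', frobNorm (J j x - J j x') ≤ LG * ‖x - x'‖)

/-- Continuous differentiability of the data, with the prescribed Jacobians and
gradients. -/
def SmoothData {n m N M : ℕ} (Fi : Fin n → Euc M → ℝ) (G : Fin m → Euc N → Euc M)
    (J : Fin m → Euc N → (Euc N →L[ℝ] Euc M)) (gradF : Fin n → Euc M → Euc M) : Prop :=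
  (∀ j x, HasFDerivAt (G j) (J j x) x) ∧ (∀ j, Continuous (J j)) ∧
  (∀ i y, HasGradientAt (Fi i) (gradF i y) y) ∧ (∀ i, Continuous (gradF i))

/-- Uniform average over all tuples `σ ∈ {1,…,m}^A`. -/
def Esig {m A : ℕ} (f : (Fin A → Fin m) → ℝ) : ℝ :=
  (∑ σ : Fin A → Fin m, f σ) / (m ^ A : ℝ)

/-- The SVRG estimator `Ĝ(σ,x,x̃)` of the inner function. -/
def GhatSVRG {m N M : ℕ} (G : Fin m → Euc N → Euc M) {A : ℕ}
    (σ : Fin A → Fin m) (x xt : Euc N) : Euc M :=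
  (A : ℝ)⁻¹ • ∑ l, (G (σ l) x - G (σ l) xt) + Gbar G xt

/-- The SVRG estimator `∂Ĝ(σ,x,x̃)` of the Jacobian. -/
def JhatSVRG {m N M : ℕ} (J : Fin m → Euc N → (Euc N →L[ℝ] Euc M)) {A : ℕ}
    (σ : Fin A → Fin m) (x xt : Euc N) : Euc N →L[ℝ] Euc M :=
  (A : ℝ)⁻¹ • ∑ l, (J (σ l) x - J (σ l) xt) + Jbar J xt

open scoped BigOperators

section Frobenius

variable {N M : ℕ}

def columnsₗ (N M : ℕ) : (Euc N →L[ℝ] Euc M) →ₗ[ℝ] PiLp 2 (fun _ : Fin N => Euc M) where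
  toFun T := WithLp.toLp 2 fun j => T (EuclideanSpace.single j 1)
  map_add' _ _ := rfl
  map_smul' _ _ := rfl

lemma frobNorm_eq_norm_columnsₗ (T : Euc N →L[ℝ] Euc M) : frobNorm T = ‖columnsₗ N M T‖ := by
  rw [frobNorm, ← Real.sqrt_sq (norm_nonneg (columnsₗ N M T)), PiLp.norm_sq_eq_of_L2]
  rfl

lemma frobNorm_nonneg (T : Euc N →L[ℝ] Euc M) : 0 ≤ frobNorm T :=
  Real.sqrt_nonneg _

/-- The `j`-th coordinate of `Tᵀ v` is `⟪T eⱼ, v⟫`, so Cauchy–Schwarz column by column. -/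
lemma norm_transApp_le (T : Euc N →L[ℝ] Euc M) (v : Euc M) :
    ‖transApp T v‖ ≤ frobNorm T * ‖v‖ := by
  have hcoord : ∀ j, (transApp T v) j = ⟪T (EuclideanSpace.single j 1), v⟫ := fun j => by
    rw [transApp, ← ContinuousLinearMap.adjoint_inner_right, EuclideanSpace.inner_single_left]
    simp
  have hsq : ‖transApp T v‖ ^ 2 ≤ (frobNorm T * ‖v‖) ^ 2 := by
    rw [EuclideanSpace.norm_sq_eq, mul_pow, frobNorm,
      Real.sq_sqrt (Finset.sum_nonneg fun _ _ => sq_nonneg _), Finset.sum_mul]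
    refine Finset.sum_le_sum fun j _ => ?_
    rw [hcoord, Real.norm_eq_abs, ← mul_pow]
    exact pow_le_pow_left₀ (abs_nonneg _) (abs_real_inner_le_norm _ _) 2
  exact (pow_le_pow_iff_left₀ (norm_nonneg _)
    (mul_nonneg (frobNorm_nonneg T) (norm_nonneg v)) two_ne_zero).mp hsq

end Frobenius

lemma Esig_eq_expect {m A : ℕ} (f : (Fin A → Fin m) → ℝ) : Esig f = 𝔼 σ, f σ := by
  rw [Esig, Fintype.expect_eq_sum_div_card, Fintype.card_fun, Fintype.card_fin, Fintype.card_fin,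
    Nat.cast_pow]

lemma Fintype.expect_fin_cons {ι R : Type*} [Fintype ι] [AddCommMonoid R] [Module ℚ≥0 R] {A : ℕ}
    (f : (Fin (A + 1) → ι) → R) : 𝔼 σ, f σ = 𝔼 j, 𝔼 σ : Fin A → ι, f (Fin.cons j σ) := by
  rw [← Fintype.expect_equiv (Fin.consEquiv fun _ => ι) (fun p => f (Fin.cons p.1 p.2)) f
    fun _ => rfl, ← Finset.expect_product', Finset.univ_product_univ]

section Variance

variable {ι E : Type*} [Fintype ι] [Nonempty ι] [NormedAddCommGroup E] [InnerProductSpace ℝ E]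

lemma expect_norm_add_sq_of_sum_eq_zero {Z : ι → E} (hZ : ∑ j, Z j = 0) (c : E) :
    𝔼 j, ‖Z j + c‖ ^ 2 = 𝔼 j, ‖Z j‖ ^ 2 + ‖c‖ ^ 2 := by
  have hcross : 𝔼 j, ⟪Z j, c⟫ = 0 := by
    rw [Fintype.expect_eq_sum_div_card, ← sum_inner, hZ, inner_zero_left, zero_div]
  simp only [norm_add_sq_real, Finset.expect_add_distrib, ← Finset.mul_expect, hcross,
    Fintype.expect_const]
  ring

omit [InnerProductSpace ℝ E] in
lemma expect_norm_sq_le_of_norm_le {Y : ι → E} {r : ℝ} (h : ∀ j, ‖Y j‖ ≤ r) :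
    𝔼 j, ‖Y j‖ ^ 2 ≤ r ^ 2 := by
  rw [← Fintype.expect_const (ι := ι) (r ^ 2)]
  exact Finset.expect_le_expect fun j _ => pow_le_pow_left₀ (norm_nonneg _) (h j) 2

omit [Nonempty ι] in
lemma sum_sub_mean_eq_zero (Y : ι → E) :
    ∑ j, (Y j - (Fintype.card ι : ℝ)⁻¹ • ∑ k, Y k) = 0 := by
  rcases isEmpty_or_nonempty ι with hι | hι
  · simp
  rw [Finset.sum_sub_distrib, Finset.sum_const, Finset.card_univ, ← Nat.cast_smul_eq_nsmul ℝ,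
    smul_smul, mul_inv_cancel₀ (Nat.cast_ne_zero.mpr Fintype.card_ne_zero), one_smul, sub_self]

lemma expect_norm_sq_eq_variance_add (Y : ι → E) :
    𝔼 j, ‖Y j‖ ^ 2 = 𝔼 j, ‖Y j - (Fintype.card ι : ℝ)⁻¹ • ∑ k, Y k‖ ^ 2
      + ‖(Fintype.card ι : ℝ)⁻¹ • ∑ k, Y k‖ ^ 2 := by
  rw [← expect_norm_add_sq_of_sum_eq_zero (sum_sub_mean_eq_zero Y)]
  simp only [sub_add_cancel]

lemma expect_norm_sub_mean_sq_le {Y : ι → E} {r : ℝ} (h : ∀ j, ‖Y j‖ ≤ r) :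
    𝔼 j, ‖Y j - (Fintype.card ι : ℝ)⁻¹ • ∑ k, Y k‖ ^ 2 ≤ r ^ 2 := by
  have := expect_norm_sq_eq_variance_add Y
  linarith [expect_norm_sq_le_of_norm_le h, sq_nonneg ‖(Fintype.card ι : ℝ)⁻¹ • ∑ k, Y k‖]

lemma norm_mean_le {Y : ι → E} {r : ℝ} (h : ∀ j, ‖Y j‖ ≤ r) :
    ‖(Fintype.card ι : ℝ)⁻¹ • ∑ k, Y k‖ ≤ r := by
  calc ‖(Fintype.card ι : ℝ)⁻¹ • ∑ k, Y k‖ ≤ 𝔼 k, ‖Y k‖ := by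
        rw [norm_smul, norm_inv, Real.norm_natCast, Fintype.expect_eq_sum_div_card, inv_mul_eq_div]
        gcongr
        exact norm_sum_le _ _
    _ ≤ 𝔼 _k : ι, r := Finset.expect_le_expect fun k _ => h k
    _ = r := Fintype.expect_const r

lemma expect_norm_sum_comp_add_sq {Z : ι → E} (hZ : ∑ j, Z j = 0) (A : ℕ) (c : E) :
    𝔼 σ : Fin A → ι, ‖∑ l, Z (σ l) + c‖ ^ 2 = A * 𝔼 j, ‖Z j‖ ^ 2 + ‖c‖ ^ 2 := by
  induction A generalizing c with
  | zero => simp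
  | succ A ih =>
    calc 𝔼 σ : Fin (A + 1) → ι, ‖∑ l, Z (σ l) + c‖ ^ 2
        = 𝔼 j, 𝔼 σ : Fin A → ι, ‖∑ l, Z (σ l) + (Z j + c)‖ ^ 2 := by
          rw [Fintype.expect_fin_cons]
          simp only [Fin.sum_univ_succ, Fin.cons_zero, Fin.cons_succ, add_comm (Z _), add_assoc]
      _ = A * 𝔼 j, ‖Z j‖ ^ 2 + (𝔼 j, ‖Z j‖ ^ 2 + ‖c‖ ^ 2) := by
          simp only [ih, Finset.expect_add_distrib, Fintype.expect_const,
            expect_norm_add_sq_of_sum_eq_zero hZ]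
      _ = (A + 1 : ℕ) * 𝔼 j, ‖Z j‖ ^ 2 + ‖c‖ ^ 2 := by push_cast; ring

end Variance

section SVRG

variable {X E : Type*} [SeminormedAddCommGroup X] [NormedAddCommGroup E] [InnerProductSpace ℝ E]
  {m A : ℕ}

/-- `GhatSVRG G` is `svrgEstimate G`, and `JhatSVRG J` corresponds to
`svrgEstimate (columnsₗ ∘ J)` through `columnsₗ`. -/
def svrgEstimate (g : Fin m → X → E) (σ : Fin A → Fin m) (x xt : X) : E :=
  (A : ℝ)⁻¹ • ∑ l, (g (σ l) x - g (σ l) xt) + (m : ℝ)⁻¹ • ∑ j, g j xt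

lemma expect_norm_svrgEstimate_sub_sq_le (hm : 0 < m) (hA : 0 < A) {g : Fin m → X → E} {L : ℝ}
    (hg : ∀ j a b, ‖g j a - g j b‖ ≤ L * ‖a - b‖) (x xt xs : X) :
    𝔼 σ : Fin A → Fin m, ‖svrgEstimate g σ x xt - (m : ℝ)⁻¹ • ∑ j, g j xs‖ ^ 2
      ≤ L ^ 2 * ((1 / (A : ℝ)) * ‖x - xt‖ ^ 2 + ‖x - xs‖ ^ 2) := by
  have : Nonempty (Fin m) := ⟨⟨0, hm⟩⟩
  have hA' : (A : ℝ) ≠ 0 := Nat.cast_ne_zero.mpr hA.ne'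
  set Y : Fin m → E := fun j => g j x - g j xt
  set Yc : Fin m → E := fun j => Y j - (m : ℝ)⁻¹ • ∑ k, Y k
  set c : E := (m : ℝ)⁻¹ • ∑ j, (g j x - g j xs)
  have hYc : ∑ j, Yc j = 0 := by
    have := sum_sub_mean_eq_zero Y
    rwa [Fintype.card_fin] at this
  have hsplit : ∀ σ : Fin A → Fin m, svrgEstimate g σ x xt - (m : ℝ)⁻¹ • ∑ j, g j xs
      = ∑ l, (A : ℝ)⁻¹ • Yc (σ l) + c := fun σ => by
    simp only [svrgEstimate, Yc, Y, c, ← Finset.smul_sum, Finset.sum_sub_distrib,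
      Finset.sum_const, Finset.card_univ, Fintype.card_fin, ← Nat.cast_smul_eq_nsmul ℝ]
    match_scalars <;> field_simp
    ring
  have hYc_le : 𝔼 j, ‖Yc j‖ ^ 2 ≤ (L * ‖x - xt‖) ^ 2 := by
    simpa only [Fintype.card_fin] using expect_norm_sub_mean_sq_le fun j => hg j x xt
  have hc_le : ‖c‖ ≤ L * ‖x - xs‖ := by
    simpa only [Fintype.card_fin] using norm_mean_le fun j => hg j x xs
  calc 𝔼 σ : Fin A → Fin m, ‖svrgEstimate g σ x xt - (m : ℝ)⁻¹ • ∑ j, g j xs‖ ^ 2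
      = A * 𝔼 j, ‖(A : ℝ)⁻¹ • Yc j‖ ^ 2 + ‖c‖ ^ 2 := by
        rw [Finset.expect_congr rfl fun σ _ => congrArg (‖·‖ ^ 2) (hsplit σ)]
        exact expect_norm_sum_comp_add_sq (Z := fun j => (A : ℝ)⁻¹ • Yc j)
          (by rw [← Finset.smul_sum, hYc, smul_zero]) A c
    _ = (1 / (A : ℝ)) * 𝔼 j, ‖Yc j‖ ^ 2 + ‖c‖ ^ 2 := by
        simp only [norm_smul, mul_pow, ← Finset.mul_expect, norm_inv, Real.norm_natCast]
        field_simp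
    _ ≤ (1 / (A : ℝ)) * (L * ‖x - xt‖) ^ 2 + (L * ‖x - xs‖) ^ 2 := by
        gcongr
    _ = L ^ 2 * ((1 / (A : ℝ)) * ‖x - xt‖ ^ 2 + ‖x - xs‖ ^ 2) := by ring

end SVRG

lemma norm_transApp_add_sq_le {N M : ℕ} {T S : Euc N →L[ℝ] Euc M} {u v : Euc M} {BF BG : ℝ} (b : Euc N)
    (hu : ‖u‖ ≤ BF) (hS : frobNorm S ≤ BG) :
    ‖transApp T u + b‖ ^ 2
      ≤ 4 * BF ^ 2 * frobNorm (T - S) ^ 2 + 4 * BG ^ 2 * ‖u - v‖ ^ 2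
        + 2 * ‖b + transApp S v‖ ^ 2 := by
  have hdecomp : transApp T u + b
      = (transApp (T - S) u + transApp S (u - v)) + (b + transApp S v) := by
    simp only [transApp, map_sub, sub_apply]
    abel
  have hTS : ‖transApp (T - S) u‖ ≤ frobNorm (T - S) * BF :=
    (norm_transApp_le _ _).trans (mul_le_mul_of_nonneg_left hu (frobNorm_nonneg _))
  have hSuv : ‖transApp S (u - v)‖ ≤ BG * ‖u - v‖ :=
    (norm_transApp_le _ _).trans (mul_le_mul_of_nonneg_right hS (norm_nonneg _))
  have hnorm : ‖transApp T u + b‖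
      ≤ (frobNorm (T - S) * BF + BG * ‖u - v‖) + ‖b + transApp S v‖ := by
    rw [hdecomp]
    exact (norm_add_le _ _).trans (by gcongr; exact (norm_add_le _ _).trans (add_le_add hTS hSuv))
  calc ‖transApp T u + b‖ ^ 2
      ≤ ((frobNorm (T - S) * BF + BG * ‖u - v‖) + ‖b + transApp S v‖) ^ 2 :=
        pow_le_pow_left₀ (norm_nonneg _) hnorm 2
    _ ≤ 2 * ((frobNorm (T - S) * BF + BG * ‖u - v‖) ^ 2 + ‖b + transApp S v‖ ^ 2) := add_sq_le
    _ ≤ 2 * (2 * ((frobNorm (T - S) * BF) ^ 2 + (BG * ‖u - v‖) ^ 2) + ‖b + transApp S v‖ ^ 2) := by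
        gcongr
        exact add_sq_le
    _ = _ := by ring

lemma columnsₗ_Jbar {m N M : ℕ} (J : Fin m → Euc N → (Euc N →L[ℝ] Euc M)) (x : Euc N) :
    columnsₗ N M (Jbar J x) = (m : ℝ)⁻¹ • ∑ j, columnsₗ N M (J j x) := by
  simp only [Jbar, map_smul, map_sum]

lemma columnsₗ_JhatSVRG {m N M A : ℕ} (J : Fin m → Euc N → (Euc N →L[ℝ] Euc M))
    (σ : Fin A → Fin m) (x xt : Euc N) :
    columnsₗ N M (JhatSVRG J σ x xt) = svrgEstimate (fun j y => columnsₗ N M (J j y)) σ x xt := by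
  simp only [JhatSVRG, svrgEstimate, columnsₗ_Jbar, map_add, map_smul, map_sum, map_sub]

lemma frobNorm_Jbar_le {m N M : ℕ} (hm : 0 < m) {J : Fin m → Euc N → (Euc N →L[ℝ] Euc M)}
    {x : Euc N} {B : ℝ} (hJ : ∀ j, frobNorm (J j x) ≤ B) : frobNorm (Jbar J x) ≤ B := by
  have : Nonempty (Fin m) := ⟨⟨0, hm⟩⟩
  have := norm_mean_le fun j => (frobNorm_eq_norm_columnsₗ (J j x)).symm.trans_le (hJ j)
  rwa [Fintype.card_fin, ← columnsₗ_Jbar, ← frobNorm_eq_norm_columnsₗ] at this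

lemma expect_frobNorm_JhatSVRG_sub_sq_le {m N M A : ℕ} (hm : 0 < m) (hA : 0 < A)
    {J : Fin m → Euc N → (Euc N →L[ℝ] Euc M)} {L : ℝ}
    (hJ : ∀ j a a', frobNorm (J j a - J j a') ≤ L * ‖a - a'‖) (x xt xs : Euc N) :
    𝔼 σ : Fin A → Fin m, frobNorm (JhatSVRG J σ x xt - Jbar J xs) ^ 2
      ≤ L ^ 2 * ((1 / (A : ℝ)) * ‖x - xt‖ ^ 2 + ‖x - xs‖ ^ 2) := by
  have hcolumns : ∀ j a a', ‖columnsₗ N M (J j a) - columnsₗ N M (J j a')‖ ≤ L * ‖a - a'‖ :=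
    fun j a a' => by simpa only [frobNorm_eq_norm_columnsₗ, map_sub] using hJ j a a'
  simpa only [frobNorm_eq_norm_columnsₗ, map_sub, columnsₗ_JhatSVRG, columnsₗ_Jbar]
    using expect_norm_svrgEstimate_sub_sq_le hm hA hcolumns x xt xs

lemma expect_svrg_direction_sq_le {n m N M A : ℕ} (hm : 0 < m) (hA : 0 < A)
    {BF LF BG LG : ℝ} {G : Fin m → Euc N → Euc M}
    {J : Fin m → Euc N → (Euc N →L[ℝ] Euc M)} {gradF : Fin n → Euc M → Euc M}
    (hA2 : Assumption2 G J gradF BF LF BG LG) (xstar x xt b : Euc N) (i : Fin n) :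
    Esig (fun σ : Fin A → Fin m =>
        ‖transApp (JhatSVRG J σ x xt) (gradF i (GhatSVRG G σ x xt)) + b‖ ^ 2)
      ≤ 4 * (BF ^ 2 * LG ^ 2 + BG ^ 4 * LF ^ 2) *
          ((1 / (A : ℝ)) * ‖x - xt‖ ^ 2 + ‖x - xstar‖ ^ 2) +
        2 * ‖b + transApp (Jbar J xstar) (gradF i (Gbar G xstar))‖ ^ 2 := by
  obtain ⟨hgrad, hgradLip, hJ, hGLip, hJLip⟩ := hA2
  have : Nonempty (Fin m) := ⟨⟨0, hm⟩⟩
  set S := (1 / (A : ℝ)) * ‖x - xt‖ ^ 2 + ‖x - xstar‖ ^ 2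
  have hJm := expect_frobNorm_JhatSVRG_sub_sq_le hm hA hJLip x xt xstar
  have hGm : 𝔼 σ : Fin A → Fin m, ‖GhatSVRG G σ x xt - Gbar G xstar‖ ^ 2 ≤ BG ^ 2 * S :=
    expect_norm_svrgEstimate_sub_sq_le hm hA hGLip x xt xstar
  have hJstar : frobNorm (Jbar J xstar) ≤ BG := frobNorm_Jbar_le hm fun j => hJ j xstar
  have hpoint : ∀ σ : Fin A → Fin m,
      ‖transApp (JhatSVRG J σ x xt) (gradF i (GhatSVRG G σ x xt)) + b‖ ^ 2
        ≤ 4 * BF ^ 2 * frobNorm (JhatSVRG J σ x xt - Jbar J xstar) ^ 2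
          + 4 * BG ^ 2 * (LF ^ 2 * ‖GhatSVRG G σ x xt - Gbar G xstar‖ ^ 2)
          + 2 * ‖b + transApp (Jbar J xstar) (gradF i (Gbar G xstar))‖ ^ 2 := fun σ => by
    refine (norm_transApp_add_sq_le (v := gradF i (Gbar G xstar)) b (hgrad i _) hJstar).trans ?_
    rw [← mul_pow]
    gcongr
    exact hgradLip i _ _
  calc Esig (fun σ : Fin A → Fin m =>
        ‖transApp (JhatSVRG J σ x xt) (gradF i (GhatSVRG G σ x xt)) + b‖ ^ 2)
      ≤ 4 * BF ^ 2 * 𝔼 σ : Fin A → Fin m, frobNorm (JhatSVRG J σ x xt - Jbar J xstar) ^ 2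
          + 4 * BG ^ 2 * (LF ^ 2 * 𝔼 σ : Fin A → Fin m, ‖GhatSVRG G σ x xt - Gbar G xstar‖ ^ 2)
          + 2 * ‖b + transApp (Jbar J xstar) (gradF i (Gbar G xstar))‖ ^ 2 := by
        rw [Esig_eq_expect]
        refine (Finset.expect_le_expect fun σ _ => hpoint σ).trans_eq ?_
        simp only [Finset.expect_add_distrib, ← Finset.mul_expect, Fintype.expect_const]
    _ ≤ 4 * BF ^ 2 * (LG ^ 2 * S) + 4 * BG ^ 2 * (LF ^ 2 * (BG ^ 2 * S))
          + 2 * ‖b + transApp (Jbar J xstar) (gradF i (Gbar G xstar))‖ ^ 2 := by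
        gcongr
    _ = _ := by ring

theorem svrg_update_direction_variance_bound_general
    {n m N M A : ℕ} (hn : 0 < n) (hm : 0 < m) (hA : 0 < A)
    (BF LF BG LG : ℝ)
    (G : Fin m → Euc N → Euc M)
    (J : Fin m → Euc N → (Euc N →L[ℝ] Euc M)) (gradF : Fin n → Euc M → Euc M)
    (hA2 : Assumption2 G J gradF BF LF BG LG)
    (xstar : Euc N) (x xt : Euc N) (β : Fin n → Euc N) :
    (n : ℝ)⁻¹ * ∑ i, Esig (fun σ : Fin A → Fin m =>
        ‖transApp (JhatSVRG J σ x xt) (gradF i (GhatSVRG G σ x xt)) + β i‖ ^ 2)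
      ≤ 8 * (BF ^ 2 * LG ^ 2 + BG ^ 4 * LF ^ 2) *
          ((1 / (A : ℝ)) * ‖x - xt‖ ^ 2 + ‖x - xstar‖ ^ 2) +
        2 * ((n : ℝ)⁻¹ * ∑ i,
          ‖β i - (-(transApp (Jbar J xstar) (gradF i (Gbar G xstar))))‖ ^ 2) := by
  have : Nonempty (Fin n) := ⟨⟨0, hn⟩⟩
  have hmean : ∀ f : Fin n → ℝ, (n : ℝ)⁻¹ * ∑ i, f i = 𝔼 i, f i := fun f => by
    rw [Fintype.expect_eq_sum_div_card, Fintype.card_fin, inv_mul_eq_div]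
  set K := BF ^ 2 * LG ^ 2 + BG ^ 4 * LF ^ 2
  set S := (1 / (A : ℝ)) * ‖x - xt‖ ^ 2 + ‖x - xstar‖ ^ 2
  have hKS : 0 ≤ K * S := by positivity
  simp only [sub_neg_eq_add, hmean]
  calc 𝔼 i, Esig (fun σ : Fin A → Fin m =>
        ‖transApp (JhatSVRG J σ x xt) (gradF i (GhatSVRG G σ x xt)) + β i‖ ^ 2)
      ≤ 𝔼 i, (4 * K * S + 2 * ‖β i + transApp (Jbar J xstar) (gradF i (Gbar G xstar))‖ ^ 2) :=
        Finset.expect_le_expect fun i _ =>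
          expect_svrg_direction_sq_le hm hA hA2 xstar x xt (β i) i
    _ = 4 * K * S + 2 * 𝔼 i, ‖β i + transApp (Jbar J xstar) (gradF i (Gbar G xstar))‖ ^ 2 := by
        rw [Finset.expect_add_distrib, Fintype.expect_const, Finset.mul_expect]
    _ ≤ 8 * K * S + 2 * 𝔼 i, ‖β i + transApp (Jbar J xstar) (gradF i (Gbar G xstar))‖ ^ 2 := by
        linarith

/-- Corollary 1 (explicit constants): variance bound on the SCDF-SVRG update direction. -/
theorem svrg_update_direction_variance_bound
    {n m N M A : ℕ} (hn : 0 < n) (hm : 0 < m) (hA : 0 < A)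
    (BF LF BG LG : ℝ) (hBF : 0 < BF) (hLF : 0 < LF) (hBG : 0 < BG) (hLG : 0 < LG)
    (Fi : Fin n → Euc M → ℝ) (G : Fin m → Euc N → Euc M)
    (J : Fin m → Euc N → (Euc N →L[ℝ] Euc M)) (gradF : Fin n → Euc M → Euc M)
    (hsm : SmoothData Fi G J gradF)
    (hA2 : Assumption2 G J gradF BF LF BG LG)
    (xstar : Euc N) (x xt : Euc N) (β : Fin n → Euc N) :
    (n : ℝ)⁻¹ * ∑ i, Esig (fun σ : Fin A → Fin m =>
        ‖transApp (JhatSVRG J σ x xt) (gradF i (GhatSVRG G σ x xt)) + β i‖ ^ 2)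
      ≤ 8 * (BF ^ 2 * LG ^ 2 + BG ^ 4 * LF ^ 2) *
          ((1 / (A : ℝ)) * ‖x - xt‖ ^ 2 + ‖x - xstar‖ ^ 2) +
        2 * ((n : ℝ)⁻¹ * ∑ i,
          ‖β i - (-(transApp (Jbar J xstar) (gradF i (Gbar G xstar))))‖ ^ 2) :=
  svrg_update_direction_variance_bound_general hn hm hA BF LF BG LG G J gradF hA2 xstar x xt β
end
end

section
/- Deviation of the SAGA estimated gradient from the true partial gradient (Lemma 2): Suppose Assumption 2 holds. Then for every x ∈ ℝ^N, every table φ = (φ_1,…,φ_m) of points of ℝ^N, and every integer A ≥ 1, E_{σ,i}[ ‖(∂Ĝ(σ,x,φ))^T ∇F_i(Ĝ(σ,x,φ)) − (∂G(x))^T ∇F_i(G(x))‖² ] ≤ 2(B_F² L_G² + B_G⁴ L_F²) · (1/A) · (1/m)∑_{j=1}^m ‖x − φ_j‖². -/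
/-!
Both SAGA estimators deviate from the true averages by the deviation `Δ_σ h` of a sample mean
of `A` uniform draws from a population mean, for the control variates
`hⱼ = Gⱼ(x) - Gⱼ(φⱼ)` and `hⱼ = ∂Gⱼ(x) - ∂Gⱼ(φⱼ)` (the latter as a vector of columns, whose norm
is the Frobenius norm). Splitting `∂Ĝᵀ ∇F(Ĝ) - ∂Gᵀ ∇F(G) = (∂Ĝ - ∂G)ᵀ ∇F(Ĝ) + ∂Gᵀ (∇F(Ĝ) - ∇F(G))`
and using `(a + b)² ≤ 2a² + 2b²` bounds the squared error by
`2 B_F² ‖Δ_σ ∂G‖² + 2 B_G² L_F² ‖Δ_σ G‖²`. The draws are independent, so the mean of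
`‖Δ_σ h‖²` over `σ` is `1/A` times the population variance of `h`, which is at most
`(1/m) ∑ ‖hⱼ‖²`; the Lipschitz bounds give `‖hⱼ‖ ≤ L_G ‖x - φⱼ‖` resp. `B_G ‖x - φⱼ‖`.
-/

noncomputable section

open Finset
open scoped RealInnerProductSpace

/-- The SAGA estimator `Ĝ(σ,x,φ)` of the inner function. -/
def GhatSAGA {m N M : ℕ} (G : Fin m → Euc N → Euc M) {A : ℕ}
    (σ : Fin A → Fin m) (x : Euc N) (φ : Fin m → Euc N) : Euc M :=
  (A : ℝ)⁻¹ • ∑ l, (G (σ l) x - G (σ l) (φ (σ l))) + (m : ℝ)⁻¹ • ∑ j, G j (φ j)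

/-- The SAGA estimator `∂Ĝ(σ,x,φ)` of the Jacobian. -/
def JhatSAGA {m N M : ℕ} (J : Fin m → Euc N → (Euc N →L[ℝ] Euc M)) {A : ℕ}
    (σ : Fin A → Fin m) (x : Euc N) (φ : Fin m → Euc N) : Euc N →L[ℝ] Euc M :=
  (A : ℝ)⁻¹ • ∑ l, (J (σ l) x - J (σ l) (φ (σ l))) + (m : ℝ)⁻¹ • ∑ j, J j (φ j)

theorem Fin.sum_pi_succ {α β : Type*} [Fintype α] [AddCommMonoid β] {A : ℕ}
    (F : (Fin (A + 1) → α) → β) :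
    ∑ σ, F σ = ∑ a, ∑ τ : Fin A → α, F (Fin.cons a τ) := by
  rw [← (Fin.consEquiv fun _ => α).sum_comp, Fintype.sum_prod_type]
  rfl

theorem esig_mono {m A : ℕ} {f g : (Fin A → Fin m) → ℝ} (h : ∀ σ, f σ ≤ g σ) :
    Esig f ≤ Esig g :=
  div_le_div_of_nonneg_right (sum_le_sum fun σ _ => h σ) (by positivity)

theorem esig_add {m A : ℕ} (f g : (Fin A → Fin m) → ℝ) :
    Esig (fun σ => f σ + g σ) = Esig f + Esig g := by
  simp only [Esig, sum_add_distrib, add_div]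

theorem esig_const_mul {m A : ℕ} (c : ℝ) (f : (Fin A → Fin m) → ℝ) :
    Esig (fun σ => c * f σ) = c * Esig f := by
  simp only [Esig, ← mul_sum, mul_div_assoc]

section SampleMean

variable {E : Type*} [NormedAddCommGroup E] [InnerProductSpace ℝ E]

/-- Multiplied through by `m` to avoid the exponent `A - 1`. -/
theorem sum_norm_sq_sum_comp_of_sum_eq_zero {m : ℕ} {X : Fin m → E} (hX : ∑ j, X j = 0)
    (A : ℕ) :
    (m : ℝ) * ∑ σ : Fin A → Fin m, ‖∑ l, X (σ l)‖ ^ 2 = A * m ^ A * ∑ j, ‖X j‖ ^ 2 := by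
  induction A with
  | zero => simp
  | succ A ih =>
    have cross : ∑ j, ∑ τ : Fin A → Fin m, ⟪X j, ∑ l, X (τ l)⟫ = 0 := by
      rw [Finset.sum_comm]
      simp [← sum_inner, hX]
    have step : ∑ σ : Fin (A + 1) → Fin m, ‖∑ l, X (σ l)‖ ^ 2
        = m ^ A * ∑ j, ‖X j‖ ^ 2 + m * ∑ τ : Fin A → Fin m, ‖∑ l, X (τ l)‖ ^ 2 := by
      simp only [Fin.sum_pi_succ, Fin.sum_univ_succ, Fin.cons_zero, Fin.cons_succ,
        norm_add_sq_real, Finset.sum_add_distrib, ← Finset.mul_sum, cross, mul_zero, add_zero]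
      simp only [sum_const, card_univ, Fintype.card_pi, Fintype.card_fin, prod_const,
        nsmul_eq_mul, Nat.cast_pow, mul_sum]
    rw [step, mul_add, ih]
    push_cast
    ring

theorem sum_norm_sq_sub_mean_le {m : ℕ} (hm : 0 < m) (h : Fin m → E) :
    ∑ j, ‖h j - (m : ℝ)⁻¹ • ∑ k, h k‖ ^ 2 ≤ ∑ j, ‖h j‖ ^ 2 := by
  set c := (m : ℝ)⁻¹ • ∑ k, h k
  have hsum : ∑ k, h k = (m : ℝ) • c := by
    rw [smul_inv_smul₀ (Nat.cast_ne_zero.mpr hm.ne')]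
  have expand : ∑ j, ‖h j - c‖ ^ 2 = ∑ j, ‖h j‖ ^ 2 - m * ‖c‖ ^ 2 := by
    simp only [norm_sub_sq_real, Finset.sum_add_distrib, Finset.sum_sub_distrib,
      ← Finset.mul_sum, ← sum_inner, hsum, real_inner_smul_left, real_inner_self_eq_norm_sq,
      sum_const, card_univ, Fintype.card_fin, nsmul_eq_mul]
    ring
  rw [expand]
  exact sub_le_self _ (by positivity)

def sampleMeanDev {V : Type*} [AddCommGroup V] [Module ℝ V] {m A : ℕ} (h : Fin m → V)
    (σ : Fin A → Fin m) : V :=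
  (A : ℝ)⁻¹ • ∑ l, h (σ l) - (m : ℝ)⁻¹ • ∑ j, h j

theorem map_sampleMeanDev {V W : Type*} [AddCommGroup V] [Module ℝ V] [AddCommGroup W]
    [Module ℝ W] (f : V →ₗ[ℝ] W) {m A : ℕ} (h : Fin m → V) (σ : Fin A → Fin m) :
    f (sampleMeanDev h σ) = sampleMeanDev (f ∘ h) σ := by
  simp [sampleMeanDev]

theorem esig_norm_sq_sampleMeanDev_le {m A : ℕ} (hm : 0 < m) (hA : 0 < A) (h : Fin m → E) :
    Esig (fun σ : Fin A → Fin m => ‖sampleMeanDev h σ‖ ^ 2)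
      ≤ (A : ℝ)⁻¹ * ((m : ℝ)⁻¹ * ∑ j, ‖h j‖ ^ 2) := by
  have hmR : (m : ℝ) ≠ 0 := Nat.cast_ne_zero.mpr hm.ne'
  have hAR : (A : ℝ) ≠ 0 := Nat.cast_ne_zero.mpr hA.ne'
  set X : Fin m → E := fun j => h j - (m : ℝ)⁻¹ • ∑ k, h k
  have hX : ∑ j, X j = 0 := by
    simp [X, sum_sub_distrib, ← Nat.cast_smul_eq_nsmul ℝ, smul_inv_smul₀ hmR]
  have hdev : ∀ σ : Fin A → Fin m, sampleMeanDev h σ = (A : ℝ)⁻¹ • ∑ l, X (σ l) := by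
    intro σ
    simp [sampleMeanDev, X, sum_sub_distrib, smul_sub, ← Nat.cast_smul_eq_nsmul ℝ,
      inv_smul_smul₀ hAR]
  have hvar := sum_norm_sq_sum_comp_of_sum_eq_zero hX A
  calc Esig (fun σ : Fin A → Fin m => ‖sampleMeanDev h σ‖ ^ 2)
      = (A : ℝ)⁻¹ * ((m : ℝ)⁻¹ * ∑ j, ‖X j‖ ^ 2) := by
        simp only [Esig, hdev, norm_smul, norm_inv, Real.norm_natCast, mul_pow, ← mul_sum]
        field_simp
        linear_combination hvar
    _ ≤ (A : ℝ)⁻¹ * ((m : ℝ)⁻¹ * ∑ j, ‖h j‖ ^ 2) := by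
        gcongr _ * (_ * ?_)
        exact sum_norm_sq_sub_mean_le hm h

theorem esig_norm_sq_sampleMeanDev_le_of_norm_le {m A : ℕ} (hm : 0 < m) (hA : 0 < A)
    {h : Fin m → E} {L : ℝ} {d : Fin m → ℝ} (hh : ∀ j, ‖h j‖ ≤ L * d j) :
    Esig (fun σ : Fin A → Fin m => ‖sampleMeanDev h σ‖ ^ 2)
      ≤ L ^ 2 * ((A : ℝ)⁻¹ * ((m : ℝ)⁻¹ * ∑ j, d j ^ 2)) := by
  refine (esig_norm_sq_sampleMeanDev_le hm hA h).trans ?_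
  have hsq : ∑ j, ‖h j‖ ^ 2 ≤ ∑ j, (L * d j) ^ 2 := by
    gcongr with j
    exact hh j
  calc _ ≤ (A : ℝ)⁻¹ * ((m : ℝ)⁻¹ * ∑ j, (L * d j) ^ 2) := by gcongr
    _ = _ := by simp only [mul_pow, ← mul_sum]; ring

end SampleMean

section Operators

variable {N M : ℕ}

/-- Makes `frobNorm` a Hilbert-space norm (`frobNorm_eq_norm_frobColumns`), so that the
variance bound applies to Jacobians. -/
def frobColumns : (Euc N →L[ℝ] Euc M) →ₗ[ℝ] PiLp 2 (fun _ : Fin N => Euc M) where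
  toFun T := WithLp.toLp 2 fun j => T (EuclideanSpace.single j 1)
  map_add' S T := by ext j; simp
  map_smul' c T := by ext j; simp

theorem frobNorm_eq_norm_frobColumns (T : Euc N →L[ℝ] Euc M) :
    frobNorm T = ‖frobColumns T‖ := by
  rw [PiLp.norm_eq_of_L2]
  rfl

theorem opNorm_le_frobNorm (T : Euc N →L[ℝ] Euc M) : ‖T‖ ≤ frobNorm T := by
  refine T.opNorm_le_bound (Real.sqrt_nonneg _) fun u => ?_
  have hu : u = ∑ j, u j • EuclideanSpace.single j (1 : ℝ) := by
    ext i
    rw [WithLp.ofLp_sum, Finset.sum_apply]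
    simp
  have hnorm : ‖u‖ = Real.sqrt (∑ j, |u j| ^ 2) := by
    simp [EuclideanSpace.norm_eq, sq_abs]
  calc ‖T u‖ = ‖∑ j, u j • T (EuclideanSpace.single j 1)‖ := by
        conv_lhs => rw [hu]
        simp
    _ ≤ ∑ j, |u j| * ‖T (EuclideanSpace.single j 1)‖ :=
        (norm_sum_le _ _).trans_eq (by simp [norm_smul])
    _ ≤ frobNorm T * ‖u‖ := by
        rw [hnorm, frobNorm, mul_comm]
        simpa [sq_abs] using Real.sum_mul_le_sqrt_mul_sqrt univ (fun j => |u j|)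
          (fun j => ‖T (EuclideanSpace.single j 1)‖)

theorem norm_Jbar_le {m : ℕ} (hm : 0 < m) {J : Fin m → Euc N → (Euc N →L[ℝ] Euc M)}
    {B : ℝ} (hJ : ∀ j x, frobNorm (J j x) ≤ B) (x : Euc N) : ‖Jbar J x‖ ≤ B := by
  calc ‖Jbar J x‖ ≤ (m : ℝ)⁻¹ * ∑ j, ‖J j x‖ := by
        rw [Jbar, norm_smul, norm_inv, Real.norm_natCast]
        gcongr
        exact norm_sum_le _ _
    _ ≤ (m : ℝ)⁻¹ * ∑ _j : Fin m, B := by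
        gcongr with j
        exact (opNorm_le_frobNorm _).trans (hJ j x)
    _ = B := by
        simp [field]

end Operators

theorem norm_adjoint_sub_adjoint_sq_le {E F : Type*} [NormedAddCommGroup E]
    [InnerProductSpace ℝ E] [CompleteSpace E] [NormedAddCommGroup F] [InnerProductSpace ℝ F]
    [CompleteSpace F] (T T' : E →L[ℝ] F) (v v' : F) :
    ‖T.adjoint v - T'.adjoint v'‖ ^ 2
      ≤ 2 * (‖T - T'‖ ^ 2 * ‖v‖ ^ 2) + 2 * (‖T'‖ ^ 2 * ‖v - v'‖ ^ 2) := by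
  have hsplit : T.adjoint v - T'.adjoint v' = (T - T').adjoint v + T'.adjoint (v - v') := by
    simp only [map_sub, sub_apply]
    abel
  have h₁ : ‖(T - T').adjoint v‖ ≤ ‖T - T'‖ * ‖v‖ := by
    simpa only [LinearIsometryEquiv.norm_map] using (T - T').adjoint.le_opNorm v
  have h₂ : ‖T'.adjoint (v - v')‖ ≤ ‖T'‖ * ‖v - v'‖ := by
    simpa only [LinearIsometryEquiv.norm_map] using T'.adjoint.le_opNorm (v - v')
  calc ‖T.adjoint v - T'.adjoint v'‖ ^ 2
      ≤ (‖(T - T').adjoint v‖ + ‖T'.adjoint (v - v')‖) ^ 2 := by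
        rw [hsplit]
        gcongr
        exact norm_add_le _ _
    _ ≤ 2 * (‖(T - T').adjoint v‖ ^ 2 + ‖T'.adjoint (v - v')‖ ^ 2) := add_sq_le
    _ ≤ 2 * ((‖T - T'‖ * ‖v‖) ^ 2 + (‖T'‖ * ‖v - v'‖) ^ 2) := by gcongr
    _ = 2 * (‖T - T'‖ ^ 2 * ‖v‖ ^ 2) + 2 * (‖T'‖ ^ 2 * ‖v - v'‖ ^ 2) := by ring

section SAGA

variable {n m N M A : ℕ} {G : Fin m → Euc N → Euc M} {J : Fin m → Euc N → (Euc N →L[ℝ] Euc M)}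

theorem GhatSAGA_sub_Gbar (σ : Fin A → Fin m) (x : Euc N) (φ : Fin m → Euc N) :
    GhatSAGA G σ x φ - Gbar G x = sampleMeanDev (fun j => G j x - G j (φ j)) σ := by
  simp only [GhatSAGA, Gbar, sampleMeanDev, sum_sub_distrib, smul_sub]
  abel

theorem JhatSAGA_sub_Jbar (σ : Fin A → Fin m) (x : Euc N) (φ : Fin m → Euc N) :
    JhatSAGA J σ x φ - Jbar J x = sampleMeanDev (fun j => J j x - J j (φ j)) σ := by
  simp only [JhatSAGA, Jbar, sampleMeanDev, sum_sub_distrib, smul_sub]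
  abel

theorem norm_sq_sagaGradient_sub_le (hm : 0 < m) {gradF : Fin n → Euc M → Euc M}
    {BF LF BG LG : ℝ} (hA2 : Assumption2 G J gradF BF LF BG LG) (i : Fin n)
    (σ : Fin A → Fin m) (x : Euc N) (φ : Fin m → Euc N) :
    ‖transApp (JhatSAGA J σ x φ) (gradF i (GhatSAGA G σ x φ)) -
        transApp (Jbar J x) (gradF i (Gbar G x))‖ ^ 2
      ≤ 2 * BF ^ 2 * ‖sampleMeanDev (fun j => frobColumns (J j x - J j (φ j))) σ‖ ^ 2
        + 2 * (BG ^ 2 * LF ^ 2) * ‖sampleMeanDev (fun j => G j x - G j (φ j)) σ‖ ^ 2 := by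
  obtain ⟨hgrad, hgradLip, hJ, -, -⟩ := hA2
  have hT : ‖JhatSAGA J σ x φ - Jbar J x‖
      ≤ ‖sampleMeanDev (fun j => frobColumns (J j x - J j (φ j))) σ‖ := by
    rw [← Function.comp_def frobColumns, ← map_sampleMeanDev, ← JhatSAGA_sub_Jbar,
      ← frobNorm_eq_norm_frobColumns]
    exact opNorm_le_frobNorm _
  have hv := hgrad i (GhatSAGA G σ x φ)
  have hT' := norm_Jbar_le hm hJ x
  have hdv := hgradLip i (GhatSAGA G σ x φ) (Gbar G x)
  rw [GhatSAGA_sub_Gbar] at hdv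
  calc _ ≤ _ := norm_adjoint_sub_adjoint_sq_le _ _ _ _
    _ ≤ 2 * (‖sampleMeanDev (fun j => frobColumns (J j x - J j (φ j))) σ‖ ^ 2 * BF ^ 2)
        + 2 * (BG ^ 2 * (LF * ‖sampleMeanDev (fun j => G j x - G j (φ j)) σ‖) ^ 2) := by
      gcongr
    _ = _ := by ring

theorem esig_norm_sq_sagaGradient_sub_le (hm : 0 < m) (hA : 0 < A)
    {gradF : Fin n → Euc M → Euc M} {BF LF BG LG : ℝ}
    (hA2 : Assumption2 G J gradF BF LF BG LG) (i : Fin n) (x : Euc N) (φ : Fin m → Euc N) :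
    Esig (fun σ : Fin A → Fin m =>
        ‖transApp (JhatSAGA J σ x φ) (gradF i (GhatSAGA G σ x φ)) -
          transApp (Jbar J x) (gradF i (Gbar G x))‖ ^ 2)
      ≤ 2 * (BF ^ 2 * LG ^ 2 + BG ^ 4 * LF ^ 2) * (A : ℝ)⁻¹ *
          ((m : ℝ)⁻¹ * ∑ j, ‖x - φ j‖ ^ 2) := by
  have hGLip := hA2.2.2.2.1
  have hJLip := hA2.2.2.2.2
  set D := (A : ℝ)⁻¹ * ((m : ℝ)⁻¹ * ∑ j, ‖x - φ j‖ ^ 2)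
  have hJdev := esig_norm_sq_sampleMeanDev_le_of_norm_le (A := A) hm hA
    (h := fun j => frobColumns (J j x - J j (φ j))) fun j => by
      rw [← frobNorm_eq_norm_frobColumns]
      exact hJLip j x (φ j)
  have hGdev := esig_norm_sq_sampleMeanDev_le_of_norm_le (A := A) hm hA
    (h := fun j => G j x - G j (φ j)) fun j => hGLip j x (φ j)
  calc _ ≤ Esig (fun σ : Fin A → Fin m =>
          2 * BF ^ 2 * ‖sampleMeanDev (fun j => frobColumns (J j x - J j (φ j))) σ‖ ^ 2
            + 2 * (BG ^ 2 * LF ^ 2) * ‖sampleMeanDev (fun j => G j x - G j (φ j)) σ‖ ^ 2) :=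
        esig_mono fun σ => norm_sq_sagaGradient_sub_le hm hA2 i σ x φ
    _ = 2 * BF ^ 2 * Esig (fun σ : Fin A → Fin m =>
            ‖sampleMeanDev (fun j => frobColumns (J j x - J j (φ j))) σ‖ ^ 2)
          + 2 * (BG ^ 2 * LF ^ 2) * Esig (fun σ : Fin A → Fin m =>
            ‖sampleMeanDev (fun j => G j x - G j (φ j)) σ‖ ^ 2) := by
        rw [esig_add, esig_const_mul, esig_const_mul]
    _ ≤ 2 * BF ^ 2 * (LG ^ 2 * D) + 2 * (BG ^ 2 * LF ^ 2) * (BG ^ 2 * D) := by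
        gcongr
    _ = _ := by ring

end SAGA

theorem saga_gradient_deviation_bound_general
    {n m N M A : ℕ} (hn : 0 < n) (hm : 0 < m) (hA : 0 < A)
    (BF LF BG LG : ℝ)
    (G : Fin m → Euc N → Euc M)
    (J : Fin m → Euc N → (Euc N →L[ℝ] Euc M)) (gradF : Fin n → Euc M → Euc M)
    (hA2 : Assumption2 G J gradF BF LF BG LG)
    (x : Euc N) (φ : Fin m → Euc N) :
    (n : ℝ)⁻¹ * ∑ i, Esig (fun σ : Fin A → Fin m =>
        ‖transApp (JhatSAGA J σ x φ) (gradF i (GhatSAGA G σ x φ)) -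
          transApp (Jbar J x) (gradF i (Gbar G x))‖ ^ 2)
      ≤ 2 * (BF ^ 2 * LG ^ 2 + BG ^ 4 * LF ^ 2) * (1 / (A : ℝ)) *
          ((m : ℝ)⁻¹ * ∑ j, ‖x - φ j‖ ^ 2) := by
  rw [inv_mul_le_iff₀ (Nat.cast_pos.mpr hn), one_div]
  calc _ ≤ Fintype.card (Fin n) • (2 * (BF ^ 2 * LG ^ 2 + BG ^ 4 * LF ^ 2) * (A : ℝ)⁻¹ *
          ((m : ℝ)⁻¹ * ∑ j, ‖x - φ j‖ ^ 2)) :=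
        sum_le_card_nsmul _ _ _ fun i _ => esig_norm_sq_sagaGradient_sub_le hm hA hA2 i x φ
    _ = _ := by rw [Fintype.card_fin, nsmul_eq_mul]

/-- Lemma 2: deviation of the SAGA estimated gradient from the true partial gradient. -/
theorem saga_gradient_deviation_bound
    {n m N M A : ℕ} (hn : 0 < n) (hm : 0 < m) (hA : 0 < A)
    (BF LF BG LG : ℝ) (hBF : 0 < BF) (hLF : 0 < LF) (hBG : 0 < BG) (hLG : 0 < LG)
    (Fi : Fin n → Euc M → ℝ) (G : Fin m → Euc N → Euc M)
    (J : Fin m → Euc N → (Euc N →L[ℝ] Euc M)) (gradF : Fin n → Euc M → Euc M)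
    (hsm : SmoothData Fi G J gradF)
    (hA2 : Assumption2 G J gradF BF LF BG LG)
    (x : Euc N) (φ : Fin m → Euc N) :
    (n : ℝ)⁻¹ * ∑ i, Esig (fun σ : Fin A → Fin m =>
        ‖transApp (JhatSAGA J σ x φ) (gradF i (GhatSAGA G σ x φ)) -
          transApp (Jbar J x) (gradF i (Gbar G x))‖ ^ 2)
      ≤ 2 * (BF ^ 2 * LG ^ 2 + BG ^ 4 * LF ^ 2) * (1 / (A : ℝ)) *
          ((m : ℝ)⁻¹ * ∑ j, ‖x - φ j‖ ^ 2) :=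
  saga_gradient_deviation_bound_general hn hm hA BF LF BG LG G J gradF hA2 x φ
end
end

section
/- Variance of the SVRG estimator of the partial gradient of G: Suppose each Jacobian ∂G_j is L_G-Lipschitz in Frobenius norm, i.e. ‖∂G_j(x) − ∂G_j(x′)‖_F ≤ L_G‖x − x′‖ for all x, x′ ∈ ℝ^N and all j. Then for all x, x̃ ∈ ℝ^N and every integer A ≥ 1, E_σ[ ‖∂Ĝ(σ,x,x̃) − ∂G(x)‖_F² ] ≤ L_G² · (1/A) · ‖x − x̃‖². -/
/-! With `Dⱼ = ∂Gⱼ(x) − ∂Gⱼ(x̃)` and `D̄ = (1/m) ∑ⱼ Dⱼ`, the error `∂Ĝ(σ,x,x̃) − ∂G(x)` is the sample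
mean of the centred family `Dⱼ − D̄` over `A` independent uniform indices. Sending a matrix to its
columns turns the Frobenius norm into the norm of a Hilbert space, where the variance of such a
sample mean is `1/A` times the variance `(1/m) ∑ⱼ ‖Dⱼ − D̄‖²`; this is at most the second moment
`(1/m) ∑ⱼ ‖Dⱼ‖² ≤ L_G² ‖x − x̃‖²`. -/

noncomputable section

open Finset
open scoped RealInnerProductSpace

def columns (N M : ℕ) : (Euc N →L[ℝ] Euc M) →ₗ[ℝ] PiLp 2 (fun _ : Fin N => Euc M) where
  toFun T := WithLp.toLp 2 fun j => T (EuclideanSpace.single j 1)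
  map_add' S T := by ext j; simp
  map_smul' c T := by ext j; simp

lemma frobNorm_eq_norm_columns {N M : ℕ} (T : Euc N →L[ℝ] Euc M) :
    frobNorm T = ‖columns N M T‖ := by
  rw [frobNorm, PiLp.norm_eq_of_L2]
  rfl

section SampleMean

variable {V : Type*}

lemma sum_eq_card_smul_mean [AddCommGroup V] [Module ℝ V] {m : ℕ} (w : Fin m → V) :
    ∑ i, w i = (m : ℝ) • (m : ℝ)⁻¹ • ∑ i, w i := by
  rcases eq_or_ne m 0 with rfl | hm
  · simp
  · rw [smul_smul, mul_inv_cancel₀ (Nat.cast_ne_zero.mpr hm), one_smul]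

lemma sum_sub_mean_eq_zero_s10 [AddCommGroup V] [Module ℝ V] {m : ℕ} (w : Fin m → V) :
    ∑ j, (w j - (m : ℝ)⁻¹ • ∑ i, w i) = 0 := by
  rw [Finset.sum_sub_distrib, Finset.sum_const, Finset.card_univ, Fintype.card_fin,
    ← Nat.cast_smul_eq_nsmul ℝ, ← sum_eq_card_smul_mean, sub_self]

lemma smul_sum_sub_const [AddCommGroup V] [Module ℝ V] {A : ℕ} (hA : A ≠ 0)
    (u : Fin A → V) (c : V) :
    (A : ℝ)⁻¹ • ∑ l, (u l - c) = (A : ℝ)⁻¹ • ∑ l, u l - c := by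
  rw [Finset.sum_sub_distrib, Finset.sum_const, Finset.card_univ, Fintype.card_fin, smul_sub,
    ← Nat.cast_smul_eq_nsmul ℝ, smul_smul, inv_mul_cancel₀ (Nat.cast_ne_zero.mpr hA), one_smul]

variable [NormedAddCommGroup V] [InnerProductSpace ℝ V]

lemma sum_norm_sub_mean_sq_le {m : ℕ} (w : Fin m → V) :
    ∑ j, ‖w j - (m : ℝ)⁻¹ • ∑ i, w i‖ ^ 2 ≤ ∑ j, ‖w j‖ ^ 2 := by
  set c := (m : ℝ)⁻¹ • ∑ i, w i
  have hcross : ∑ j, ⟪w j, c⟫ = m * ‖c‖ ^ 2 := by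
    rw [← sum_inner, sum_eq_card_smul_mean w, real_inner_smul_left, real_inner_self_eq_norm_sq]
  calc ∑ j, ‖w j - c‖ ^ 2 = ∑ j, ‖w j‖ ^ 2 - 2 * ∑ j, ⟪w j, c⟫ + m * ‖c‖ ^ 2 := by
        simp only [norm_sub_sq_real, Finset.sum_add_distrib, Finset.sum_sub_distrib,
          Finset.mul_sum, Finset.sum_const, Finset.card_univ, Fintype.card_fin, nsmul_eq_mul]
    _ ≤ ∑ j, ‖w j‖ ^ 2 := by rw [hcross]; nlinarith [sq_nonneg ‖c‖, (m.cast_nonneg : (0 : ℝ) ≤ m)]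

/-- Summing over all `σ`, the cross terms `⟪v (σ l), v (σ l')⟫` with `l ≠ l'` vanish because
`v` has zero sum, leaving `A` copies of `m ^ (A - 1) ∑ⱼ ‖v j‖²`. -/
lemma sum_norm_sq_sum_comp_mul_card {m : ℕ} (v : Fin m → V) (hv : ∑ j, v j = 0) (A : ℕ) :
    (∑ σ : Fin A → Fin m, ‖∑ l, v (σ l)‖ ^ 2) * m = A * m ^ A * ∑ j, ‖v j‖ ^ 2 := by
  induction A with
  | zero => simp
  | succ A ih =>
    set S : (Fin A → Fin m) → V := fun σ => ∑ l, v (σ l)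
    have hsplit : ∑ σ : Fin (A + 1) → Fin m, ‖∑ l, v (σ l)‖ ^ 2
        = ∑ p : Fin m × (Fin A → Fin m), (‖v p.1‖ ^ 2 + 2 * ⟪v p.1, S p.2⟫ + ‖S p.2‖ ^ 2) := by
      rw [← (Fin.consEquiv fun _ : Fin (A + 1) => Fin m).sum_comp]
      refine Fintype.sum_congr _ _ fun p => ?_
      rw [← norm_add_sq_real]
      simp [Fin.sum_univ_succ, Fin.consEquiv, S]
    have hcross : ∑ p : Fin m × (Fin A → Fin m), 2 * ⟪v p.1, S p.2⟫ = 0 := by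
      rw [Fintype.sum_prod_type_right]
      refine Finset.sum_eq_zero fun σ _ => ?_
      rw [← Finset.mul_sum]
      change 2 * ∑ i, ⟪v i, S σ⟫ = 0
      rw [← sum_inner, hv, inner_zero_left, mul_zero]
    rw [hsplit, Finset.sum_add_distrib, Finset.sum_add_distrib, hcross,
      Fintype.sum_prod_type, Fintype.sum_prod_type_right]
    simp only [Finset.sum_const, Finset.card_univ, Fintype.card_fun, Fintype.card_fin,
      nsmul_eq_mul, ← Finset.mul_sum, S]
    push_cast
    linear_combination (m : ℝ) * ih

lemma esig_norm_sq_smul_sum_comp {m A : ℕ} (v : Fin m → V) (hv : ∑ j, v j = 0) :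
    Esig (fun σ : Fin A → Fin m => ‖(A : ℝ)⁻¹ • ∑ l, v (σ l)‖ ^ 2)
      = (A : ℝ)⁻¹ * ((m : ℝ)⁻¹ * ∑ j, ‖v j‖ ^ 2) := by
  have hsum := sum_norm_sq_sum_comp_mul_card v hv A
  simp only [Esig, norm_smul, mul_pow, norm_inv, Real.norm_natCast, ← Finset.mul_sum]
  rcases eq_or_ne A 0 with rfl | hA
  · simp
  rcases eq_or_ne m 0 with rfl | hm
  · simp [hA]
  have hA' : (A : ℝ) ≠ 0 := Nat.cast_ne_zero.mpr hA
  have hm' : (m : ℝ) ≠ 0 := Nat.cast_ne_zero.mpr hm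
  field_simp
  linear_combination hsum

lemma mean_inv_mul_sum_le {m : ℕ} (f : Fin m → ℝ) {C : ℝ} (hC : 0 ≤ C) (hf : ∀ j, f j ≤ C) :
    (m : ℝ)⁻¹ * ∑ j, f j ≤ C := by
  calc (m : ℝ)⁻¹ * ∑ j, f j ≤ (m : ℝ)⁻¹ * (m * C) := by
        gcongr
        simpa using Finset.sum_le_card_nsmul Finset.univ f C fun j _ => hf j
    _ = ((m : ℝ)⁻¹ * m) * C := by ring
    _ ≤ C := mul_le_of_le_one_left hC (inv_mul_le_one_of_le₀ le_rfl m.cast_nonneg)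

lemma esig_norm_sq_smul_sum_sub_mean_le {m A : ℕ} (w : Fin m → V) {C : ℝ}
    (hw : ∀ j, ‖w j‖ ≤ C) :
    Esig (fun σ : Fin A → Fin m => ‖(A : ℝ)⁻¹ • ∑ l, (w (σ l) - (m : ℝ)⁻¹ • ∑ i, w i)‖ ^ 2)
      ≤ C ^ 2 / A := by
  rw [esig_norm_sq_smul_sum_comp _ (sum_sub_mean_eq_zero_s10 w), div_eq_inv_mul]
  gcongr
  calc (m : ℝ)⁻¹ * ∑ j, ‖w j - (m : ℝ)⁻¹ • ∑ i, w i‖ ^ 2 ≤ (m : ℝ)⁻¹ * ∑ j, ‖w j‖ ^ 2 :=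
        mul_le_mul_of_nonneg_left (sum_norm_sub_mean_sq_le w) (by positivity)
    _ ≤ C ^ 2 := mean_inv_mul_sum_le _ (sq_nonneg C) fun j => by
        gcongr
        exact hw j

end SampleMean

lemma JhatSVRG_sub_Jbar {m N M A : ℕ} (hA : A ≠ 0) (J : Fin m → Euc N → (Euc N →L[ℝ] Euc M))
    (σ : Fin A → Fin m) (x xt : Euc N) :
    JhatSVRG J σ x xt - Jbar J x = (A : ℝ)⁻¹ • ∑ l, ((J (σ l) x - J (σ l) xt)
      - (m : ℝ)⁻¹ • ∑ i, (J i x - J i xt)) := by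
  rw [smul_sum_sub_const hA]
  simp only [JhatSVRG, Jbar, Finset.sum_sub_distrib, smul_sub]
  abel

theorem svrg_jacobian_variance_general
    {m N M A : ℕ} (hA : 0 < A) (LG : ℝ)
    (J : Fin m → Euc N → (Euc N →L[ℝ] Euc M))
    (hJLip : ∀ j (x x' : Euc N), frobNorm (J j x - J j x') ≤ LG * ‖x - x'‖)
    (x xt : Euc N) :
    Esig (fun σ : Fin A → Fin m => frobNorm (JhatSVRG J σ x xt - Jbar J x) ^ 2)
      ≤ LG ^ 2 * (1 / (A : ℝ)) * ‖x - xt‖ ^ 2 := by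
  set w : Fin m → PiLp 2 (fun _ : Fin N => Euc M) := fun j => columns N M (J j x - J j xt)
  have hw : ∀ j, ‖w j‖ ≤ LG * ‖x - xt‖ := fun j => by
    rw [← frobNorm_eq_norm_columns]
    exact hJLip j x xt
  calc Esig (fun σ : Fin A → Fin m => frobNorm (JhatSVRG J σ x xt - Jbar J x) ^ 2)
      = Esig (fun σ : Fin A → Fin m =>
          ‖(A : ℝ)⁻¹ • ∑ l, (w (σ l) - (m : ℝ)⁻¹ • ∑ i, w i)‖ ^ 2) := by
        simp only [frobNorm_eq_norm_columns, JhatSVRG_sub_Jbar hA.ne', map_smul, map_sum,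
          map_sub, w]
    _ ≤ (LG * ‖x - xt‖) ^ 2 / A := esig_norm_sq_smul_sum_sub_mean_le w hw
    _ = LG ^ 2 * (1 / (A : ℝ)) * ‖x - xt‖ ^ 2 := by ring

/-- Variance of the SVRG estimator of the partial gradient of `G`. -/
theorem svrg_jacobian_variance
    {m N M A : ℕ} (hm : 0 < m) (hA : 0 < A) (LG : ℝ)
    (G : Fin m → Euc N → Euc M)
    (J : Fin m → Euc N → (Euc N →L[ℝ] Euc M))
    (hJ : ∀ j (x : Euc N), HasFDerivAt (G j) (J j x) x)
    (hJc : ∀ j, Continuous (J j))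
    (hJLip : ∀ j (x x' : Euc N), frobNorm (J j x - J j x') ≤ LG * ‖x - x'‖)
    (x xt : Euc N) :
    Esig (fun σ : Fin A → Fin m => frobNorm (JhatSVRG J σ x xt - Jbar J x) ^ 2)
      ≤ LG ^ 2 * (1 / (A : ℝ)) * ‖x - xt‖ ^ 2 :=
  svrg_jacobian_variance_general hA LG J hJLip x xt
end
end
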